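/- arXiv:1802.04996 — 2 statements merged into one kernel-verified Lean document; each statement's English description precedes it below -/
import Mathlib

section
/- Let N be a positive integer and let Γ₁(N) ⊆ SL₂(ℤ) be the congruence subgroup of matrices congruent to an upper unitriangular matrix modulo N (i.e. a ≡ d ≡ 1 and c ≡ 0 mod N). Let Γ₁(N) act on ℤ² by the standard (regular) representation, and consider the induced action on the k-th symmetric power Sym^k(ℤ²) (equivalently, on homogeneous binary forms of degree k in ℤ[X,Y], where a matrix γ = [[a,b],[c,d]] acts by (X,Y) ↦ (aX+cY, bX+dY)). Then for every integer k ≥ 1 the zeroth group cohomology vanishes: H⁰(Γ₁(N), Sym^k ℤ²) = 0; equivalently, the only homogeneous polynomial P ∈ ℤ[X,Y] of degree k that is fixed by every element of Γ₁(N) under this action is P = 0. -/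
open MvPolynomial in
private theorem aux_evalcomp (P : MvPolynomial (Fin 2) ℤ) (v : Fin 2 → MvPolynomial (Fin 2) ℤ)
    (x w : Fin 2 → ℤ) (hw : ∀ i, eval x (v i) = w i) :
    eval x (aeval v P) = eval w P := by
  rw [aeval_def, eval₂_comp_left (eval x)]
  have h2 : (fun i => eval x (v i)) = w := funext hw
  rw [show ((eval x).comp (algebraMap ℤ (MvPolynomial (Fin 2) ℤ))) = RingHom.id ℤ from
    Subsingleton.elim _ _, show (⇑(eval x) ∘ v) = w from h2]
  rfl

open MvPolynomial in
private theorem aux_evalcomp' (P : MvPolynomial (Fin 2) ℤ) (v : Fin 2 → Polynomial ℤ) (y : ℤ)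
    (w : Fin 2 → ℤ) (hw : ∀ i, Polynomial.eval y (v i) = w i) :
    Polynomial.eval y (aeval v P) = eval w P := by
  rw [aeval_def]
  have := eval₂_comp_left (Polynomial.evalRingHom y) (algebraMap ℤ (Polynomial ℤ)) v P
  simp only [Polynomial.coe_evalRingHom] at this
  rw [this]
  have h2 : (Polynomial.eval y ∘ v) = w := funext fun i => hw i
  rw [show ((Polynomial.evalRingHom y).comp (algebraMap ℤ (Polynomial ℤ))) = RingHom.id ℤ from
    Subsingleton.elim _ _, h2]
  rfl

open MvPolynomial in
private theorem aux_homog_scale (P : MvPolynomial (Fin 2) ℤ) (k : ℕ) (hP : P.IsHomogeneous k)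
    (s a b : ℤ) : eval ![s*a, s*b] P = s^k * eval ![a,b] P := by
  rw [eval_eq, eval_eq, Finset.mul_sum]
  apply Finset.sum_congr rfl
  intro d hd
  have hdeg := hP (mem_support_iff.mp hd)
  simp only [Finsupp.weight_apply, Finsupp.sum, Pi.one_apply, smul_eq_mul, mul_one] at hdeg
  have h1 : ∏ i ∈ d.support, ![s*a, s*b] i ^ d i
      = (∏ i ∈ d.support, s ^ d i) * ∏ i ∈ d.support, ![a,b] i ^ d i := by
    rw [← Finset.prod_mul_distrib]
    refine Finset.prod_congr rfl fun i _ => ?_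
    rw [← mul_pow]; congr 1; fin_cases i <;> simp
  rw [h1, Finset.prod_pow_eq_pow_sum, hdeg]; ring

/-- For `N ≥ 1` and `k ≥ 1`, the only homogeneous polynomial `P ∈ ℤ[X,Y]` of degree `k`
that is fixed by every element `γ = [[a,b],[c,d]]` of the congruence subgroup `Γ₁(N)`
(acting by `(X,Y) ↦ (aX+cY, bX+dY)`) is `P = 0`; that is,
`H⁰(Γ₁(N), Sym^k ℤ²) = 0` for `k ≥ 1`. -/
theorem gamma1_invariants_symk_eq_zero
    (N : ℕ) (hN : 0 < N) (k : ℕ) (hk : 1 ≤ k)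
    (P : MvPolynomial (Fin 2) ℤ) (hP : P.IsHomogeneous k)
    (hfix : ∀ γ : Matrix.SpecialLinearGroup (Fin 2) ℤ,
      ((γ.1 0 0 : ℤ) : ZMod N) = 1 →
      ((γ.1 1 1 : ℤ) : ZMod N) = 1 →
      ((γ.1 1 0 : ℤ) : ZMod N) = 0 →
      MvPolynomial.aeval
        ![MvPolynomial.C (γ.1 0 0) * MvPolynomial.X 0 +
            MvPolynomial.C (γ.1 1 0) * MvPolynomial.X 1,
          MvPolynomial.C (γ.1 0 1) * MvPolynomial.X 0 +
            MvPolynomial.C (γ.1 1 1) * MvPolynomial.X 1] P = P) :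
    P = 0 := by
  classical
  open MvPolynomial in
  -- Invariance under the upper unipotent [[1,m],[0,1]] : (a,b) ↦ (a, m a + b)
  have h1 : ∀ m a b : ℤ, eval ![a, m*a + b] P = eval ![a, b] P := by
    intro m a b
    have hγ := hfix ⟨!![1, m; 0, 1], by simp [Matrix.det_fin_two_of]⟩
      (by simp) (by simp) (by simp)
    have key := congrArg (eval ![a, b]) hγ
    rw [aux_evalcomp P _ ![a, b] ![a, m*a + b]
      (by intro i; fin_cases i <;> simp)] at key
    exact key
  -- Invariance under the lower unipotent [[1,0],[mN,1]] : (a,b) ↦ (a + m N b, b)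
  have h2 : ∀ m a b : ℤ, eval ![a + m*N*b, b] P = eval ![a, b] P := by
    intro m a b
    have hγ := hfix ⟨!![1, 0; m*(N:ℤ), 1], by simp [Matrix.det_fin_two_of]⟩
      (by simp) (by simp) (by push_cast; simp)
    have key := congrArg (eval ![a, b]) hγ
    rw [aux_evalcomp P _ ![a, b] ![a + m*N*b, b]
      (by intro i; fin_cases i <;> simp)] at key
    exact key
  set c : ℤ := eval ![1, 0] P with hc
  -- Step A : P(1,t) = c for all t
  have hA : ∀ t : ℤ, eval ![1, t] P = c := by
    intro t
    have := h1 t 1 0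
    simpa using this
  -- Step B : P(s, s t) = s^k c
  have hB : ∀ s t : ℤ, eval ![s, s*t] P = s^k * c := by
    intro s t
    have := aux_homog_scale P k hP s 1 t
    rw [hA t] at this
    simpa using this
  -- Step C : P(a,b) = a^k c for a ≠ 0
  have hC : ∀ a b : ℤ, a ≠ 0 → eval ![a, b] P = a^k * c := by
    intro a b ha
    set p : Polynomial ℤ := aeval ![Polynomial.C a, Polynomial.X] P with hp
    have hpe : ∀ y : ℤ, p.eval y = eval ![a, y] P := by
      intro y
      rw [hp, aux_evalcomp' P _ y ![a, y] (by intro i; fin_cases i <;> simp)]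
    have hroots : p - Polynomial.C (a^k * c) = 0 := by
      apply Polynomial.eq_zero_of_infinite_isRoot
      apply Set.Infinite.mono (s := Set.range (fun t : ℤ => a * t))
      · rintro _ ⟨t, rfl⟩
        simp only [Set.mem_setOf_eq, Polynomial.IsRoot, Polynomial.eval_sub,
          Polynomial.eval_C, hpe]
        rw [hB a t]; ring
      · exact Set.infinite_range_of_injective (mul_right_injective₀ ha)
    have := sub_eq_zero.mp hroots
    have := congrArg (Polynomial.eval b) this
    rw [hpe b] at this
    simpa using this
  -- Step D : P(0,b) = 0
  have hD : ∀ b : ℤ, eval ![0, b] P = 0 := by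
    intro b
    set r : Polynomial ℤ := aeval ![Polynomial.X, Polynomial.C b] P
        - Polynomial.C c * Polynomial.X ^ k with hr
    have hre : ∀ y : ℤ, r.eval y = eval ![y, b] P - c * y^k := by
      intro y
      rw [hr]
      simp only [Polynomial.eval_sub, Polynomial.eval_mul, Polynomial.eval_C,
        Polynomial.eval_pow, Polynomial.eval_X]
      rw [aux_evalcomp' P _ y ![y, b] (by intro i; fin_cases i <;> simp)]
    have hroots : r = 0 := by
      apply Polynomial.eq_zero_of_infinite_isRoot
      apply Set.Infinite.mono (s := {x : ℤ | x ≠ 0})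
      · intro x hx
        simp only [Set.mem_setOf_eq, Polynomial.IsRoot, hre]
        rw [hC x b hx]; ring
      · exact (Set.finite_singleton (0:ℤ)).infinite_compl
    have := congrArg (Polynomial.eval (0:ℤ)) hroots
    rw [hre 0] at this
    rw [zero_pow (by omega)] at this
    simpa using this
  -- Step E : c = 0
  have hE : c = 0 := by
    have := h2 1 0 1
    simp only [zero_add, mul_one, one_mul] at this
    rw [hD 1] at this
    rw [hC (N:ℤ) 1 (by exact_mod_cast hN.ne')] at this
    have hNk : ((N:ℤ))^k ≠ 0 := pow_ne_zero _ (by exact_mod_cast hN.ne')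
    exact (mul_eq_zero.mp this).resolve_left hNk
  -- conclude
  apply hP.eq_zero_of_forall_eval_eq_zero
  intro x
  have hx : x = ![x 0, x 1] := by
    funext i; fin_cases i <;> simp
  rw [hx]
  by_cases h0 : x 0 = 0
  · rw [h0]; exact hD _
  · rw [hC _ _ h0, hE, mul_zero]
end

section
/- Let τ ∈ ℍ, let k ≥ 2, N ≥ 1 and D ≥ 1 be integers, let a, b ∈ ℤ, and set ζ_N = exp(2πi/N). With F^{(k+1)}_{(a,b)}(τ) = (−1)^{k+2} k! · Σ_{(m,n) ∈ ℤ² ∖ {(0,0)}} ζ_N^{mb − na} (mτ+n)^{−(k+1)} (absolutely convergent since k+1 ≥ 3), the following identity holds: (−1)^k · k! · D^{−k+1} · Σ over (c,d) with 0 ≤ c,d ≤ D−1, (c,d) ≠ (0,0), of Σ over (m,n) ∈ ℤ², of ζ_N^{(Dm+c)·b − (Dn+d)·a} · (mτ + n + (cτ+d)/D)^{−(k+1)} = D² · F^{(k+1)}_{(a,b)}(τ) − D^{1−k} · F^{(k+1)}_{(Da,Db)}(τ). (This is the lattice-sum computation identifying the specialization of the D-variant of the Kronecker section with the Eisenstein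 series appearing in Kato's Euler system.) -/
open Complex Real

/-!
Write `f(m, n) = ζ_N^{mb − na} (mτ + n)^{−(k+1)}`. Since
`mτ + n + (cτ + d)/D = ((Dm + c)τ + (Dn + d))/D`, the `(c, d)`-th inner sum is `D^{k+1}` times
the sum of `f` over the residue class of `(c, d)` mod `D`. All residue classes together give the
full lattice sum of `f`, i.e. `F_{(a,b)}` up to normalization, while the omitted class `(0, 0)`
contributes `f(Dm, Dn) = D^{−(k+1)} ζ_N^{m·Db − n·Da} (mτ + n)^{−(k+1)}`, i.e. a multiple
of `F_{(Da,Db)}`.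
-/

/-- Kato's Eisenstein series of level `N`, weight `w` and parameters `(a,b)`:
`F^{(w)}_{(a,b)}(τ) = (−1)^{w+1} (w−1)! Σ_{(m,n) ∈ ℤ² ∖ {(0,0)}} ζ_N^{mb−na} (mτ+n)^{−w}`,
where `ζ_N = exp(2πi/N)`. -/
noncomputable def katoEisenstein (N : ℕ) (w : ℕ) (a b : ℤ) (τ : ℂ) : ℂ :=
  (-1 : ℂ) ^ (w + 1) * (Nat.factorial (w - 1) : ℂ) *
    ∑' p : ℤ × ℤ,
      if p ≠ (0, 0) then
        Complex.exp (2 * Real.pi * Complex.I / N) ^ (p.1 * b - p.2 * a) *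
          ((p.1 : ℂ) * τ + (p.2 : ℂ)) ^ (-(w : ℤ))
      else 0

noncomputable def katoSummand (N w : ℕ) (a b : ℤ) (τ : ℂ) (p : ℤ × ℤ) : ℂ :=
  Complex.exp (2 * Real.pi * Complex.I / N) ^ (p.1 * b - p.2 * a) *
    ((p.1 : ℂ) * τ + (p.2 : ℂ)) ^ (-(w : ℤ))

lemma norm_exp_two_pi_I_div_zpow (N : ℕ) (j : ℤ) :
    ‖Complex.exp (2 * Real.pi * Complex.I / N) ^ j‖ = 1 := by
  have h : (2 : ℂ) * Real.pi * Complex.I / N = ((2 * Real.pi / N : ℝ) : ℂ) * Complex.I := by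
    push_cast; ring
  rw [norm_zpow, h, Complex.norm_exp_ofReal_mul_I, one_zpow]

lemma katoSummand_zero {N w : ℕ} (hw : w ≠ 0) (a b : ℤ) (τ : ℂ) :
    katoSummand N w a b τ 0 = 0 := by
  simp [katoSummand, zero_zpow _ (show -(w : ℤ) ≠ 0 by omega)]

lemma katoEisenstein_eq_tsum {w : ℕ} (hw : w ≠ 0) (N : ℕ) (a b : ℤ) (τ : ℂ) :
    katoEisenstein N w a b τ =
      (-1 : ℂ) ^ (w + 1) * (w - 1).factorial * ∑' p, katoSummand N w a b τ p := by
  refine congrArg _ (tsum_congr fun p => ?_)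
  by_cases hp : p = (0, 0)
  · rw [if_neg (not_not.mpr hp), hp]
    exact (katoSummand_zero hw a b τ).symm
  · rw [if_pos hp, katoSummand]

lemma summable_katoSummand {w : ℕ} (hw : 3 ≤ w) (N : ℕ) (a b : ℤ) {τ : ℂ}
    (hτ : 0 < τ.im) :
    Summable (katoSummand N w a b τ) := by
  have h := EisensteinSeries.summable_norm_eisSummand (by omega : (3 : ℤ) ≤ w) ⟨τ, hτ⟩
  refine .of_norm ((h.comp_injective (finTwoArrowEquiv ℤ).symm.injective).congr fun p => ?_)
  rw [Function.comp_apply, katoSummand, norm_mul, norm_exp_two_pi_I_div_zpow, one_mul]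
  rfl

lemma tsum_katoSummand_natCast_mul (N w D : ℕ) (a b : ℤ) (τ : ℂ) :
    ∑' mn : ℤ × ℤ, katoSummand N w a b τ (D * mn.1, D * mn.2) =
      (D : ℂ) ^ (-(w : ℤ)) * ∑' p, katoSummand N w (D * a) (D * b) τ p := by
  rw [← tsum_mul_left]
  refine tsum_congr fun p => ?_
  simp only [katoSummand]
  rw [show (D : ℤ) * p.1 * b - D * p.2 * a = p.1 * (D * b) - p.2 * (D * a) by ring]
  push_cast
  rw [show (D : ℂ) * p.1 * τ + D * p.2 = D * (p.1 * τ + p.2) by ring, mul_zpow]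
  ring

lemma tsum_translate_eq_tsum_katoSummand {D : ℕ} (hD : D ≠ 0) (N w : ℕ) (a b : ℤ) (τ : ℂ)
    (c d : ℕ) :
    ∑' mn : ℤ × ℤ, Complex.exp (2 * Real.pi * Complex.I / N) ^
        ((D * mn.1 + c) * b - (D * mn.2 + d) * a) *
        ((mn.1 : ℂ) * τ + mn.2 + (c * τ + d) / D) ^ (-(w : ℤ)) =
      (D : ℂ) ^ (w : ℤ) *
        ∑' mn : ℤ × ℤ, katoSummand N w a b τ (D * mn.1 + c, D * mn.2 + d) := by
  rw [← tsum_mul_left]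
  refine tsum_congr fun ⟨m, n⟩ => ?_
  have hD' : (D : ℂ) ≠ 0 := Nat.cast_ne_zero.mpr hD
  have hx : (m : ℂ) * τ + n + (c * τ + d) / D =
      (((D * m + c : ℤ) : ℂ) * τ + (D * n + d : ℤ)) / D := by
    push_cast
    field_simp
    ring
  rw [katoSummand, hx, div_zpow, zpow_neg (D : ℂ), div_inv_eq_mul]
  ring

lemma tsum_eq_sum_tsum_residues {α : Type*} [AddCommGroup α] [UniformSpace α]
    [IsUniformAddGroup α] [CompleteSpace α] [T0Space α] (D : ℕ) [NeZero D]
    {f : ℤ × ℤ → α} (hf : Summable f) :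
    ∑' p, f p = ∑ cd ∈ Finset.range D ×ˢ Finset.range D,
      ∑' mn : ℤ × ℤ, f (D * mn.1 + cd.1, D * mn.2 + cd.2) := by
  let e : (Fin D × Fin D) × (ℤ × ℤ) ≃ ℤ × ℤ :=
    (Equiv.prodComm _ _).trans ((Equiv.prodProdProdComm ℤ ℤ (Fin D) (Fin D)).trans
      (Equiv.prodCongr (Int.divModEquiv D).symm (Int.divModEquiv D).symm))
  rw [← e.tsum_eq f, Summable.tsum_prod (f := fun q => f (e q)) (e.summable_iff.mpr hf),
    tsum_fintype, Fintype.sum_prod_type, Finset.sum_product, ← Fin.sum_univ_eq_sum_range]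
  refine Finset.sum_congr rfl fun c _ => ?_
  rw [← Fin.sum_univ_eq_sum_range (fun d => ∑' mn : ℤ × ℤ, f (D * mn.1 + c, D * mn.2 + d))]
  refine Finset.sum_congr rfl fun d _ => tsum_congr fun mn => ?_
  simp [e, mul_comm]

theorem kronecker_specialization_eq_kato_eisenstein_general
    (τ : ℂ) (hτ : 0 < τ.im) (k N D : ℕ) (hk : 2 ≤ k) (hD : 1 ≤ D)
    (a b : ℤ) :
    (-1 : ℂ) ^ k * (Nat.factorial k : ℂ) * (D : ℂ) ^ (1 - (k : ℤ)) *
      ∑ cd ∈ (Finset.range D ×ˢ Finset.range D).erase (0, 0),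
        ∑' mn : ℤ × ℤ,
          Complex.exp (2 * Real.pi * Complex.I / N) ^
              (((D : ℤ) * mn.1 + (cd.1 : ℤ)) * b - ((D : ℤ) * mn.2 + (cd.2 : ℤ)) * a) *
            ((mn.1 : ℂ) * τ + (mn.2 : ℂ) + ((cd.1 : ℂ) * τ + (cd.2 : ℂ)) / (D : ℂ)) ^
              (-((k : ℤ) + 1))
    = (D : ℂ) ^ 2 * katoEisenstein N (k + 1) a b τ -
        (D : ℂ) ^ (1 - (k : ℤ)) * katoEisenstein N (k + 1) (D * a) (D * b) τ := by
  have hD0 : D ≠ 0 := by omega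
  have : NeZero D := ⟨hD0⟩
  have hDC : (D : ℂ) ≠ 0 := Nat.cast_ne_zero.mpr hD0
  have hinner (cd : ℕ × ℕ) := tsum_translate_eq_tsum_katoSummand hD0 N (k + 1) a b τ cd.1 cd.2
  push_cast at hinner
  have hmem : ((0, 0) : ℕ × ℕ) ∈ Finset.range D ×ˢ Finset.range D := by simp; omega
  rw [Finset.sum_congr rfl fun cd _ => hinner cd, ← Finset.mul_sum, Finset.sum_erase_eq_sub hmem,
    ← tsum_eq_sum_tsum_residues D (summable_katoSummand (by omega) N a b hτ),
    katoEisenstein_eq_tsum (by omega), katoEisenstein_eq_tsum (by omega), Nat.add_sub_cancel]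
  simp only [Nat.cast_zero, add_zero, tsum_katoSummand_natCast_mul]
  push_cast
  have hpow : (D : ℂ) ^ (1 - (k : ℤ)) * (D : ℂ) ^ ((k : ℤ) + 1) = (D : ℂ) ^ 2 := by
    rw [← zpow_add₀ hDC, show 1 - (k : ℤ) + (k + 1) = ((2 : ℕ) : ℤ) by ring, zpow_natCast]
  have hcancel : (D : ℂ) ^ ((k : ℤ) + 1) * (D : ℂ) ^ (-((k : ℤ) + 1)) = 1 := by
    rw [← zpow_add₀ hDC, add_neg_cancel, zpow_zero]
  rw [pow_succ, pow_succ]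
  linear_combination
    (-1 : ℂ) ^ k * k.factorial * ((∑' p, katoSummand N (k + 1) a b τ p) * hpow -
      (D : ℂ) ^ (1 - (k : ℤ)) * (∑' p, katoSummand N (k + 1) (D * a) (D * b) τ p) * hcancel)

/-- For `τ ∈ ℍ`, `k ≥ 2`, `N ≥ 1`, `D ≥ 1` and `a, b ∈ ℤ`, the lattice-sum computation
identifying the specialization of the `D`-variant of the Kronecker section with Kato's
Eisenstein series:
`(−1)^k k! D^{−k+1} Σ_{(c,d) ≠ (0,0), 0 ≤ c,d < D} Σ_{(m,n) ∈ ℤ²}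
   ζ_N^{(Dm+c)b − (Dn+d)a} (mτ + n + (cτ+d)/D)^{−(k+1)}
 = D² F^{(k+1)}_{(a,b)}(τ) − D^{1−k} F^{(k+1)}_{(Da,Db)}(τ)`. -/
theorem kronecker_specialization_eq_kato_eisenstein
    (τ : ℂ) (hτ : 0 < τ.im) (k N D : ℕ) (hk : 2 ≤ k) (hN : 1 ≤ N) (hD : 1 ≤ D)
    (a b : ℤ) :
    (-1 : ℂ) ^ k * (Nat.factorial k : ℂ) * (D : ℂ) ^ (1 - (k : ℤ)) *
      ∑ cd ∈ (Finset.range D ×ˢ Finset.range D).erase (0, 0),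
        ∑' mn : ℤ × ℤ,
          Complex.exp (2 * Real.pi * Complex.I / N) ^
              (((D : ℤ) * mn.1 + (cd.1 : ℤ)) * b - ((D : ℤ) * mn.2 + (cd.2 : ℤ)) * a) *
            ((mn.1 : ℂ) * τ + (mn.2 : ℂ) + ((cd.1 : ℂ) * τ + (cd.2 : ℂ)) / (D : ℂ)) ^
              (-((k : ℤ) + 1))
    = (D : ℂ) ^ 2 * katoEisenstein N (k + 1) a b τ -
        (D : ℂ) ^ (1 - (k : ℤ)) * katoEisenstein N (k + 1) (D * a) (D * b) τ :=
  kronecker_specialization_eq_kato_eisenstein_general τ hτ k N D hk hD a b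
end
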